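/- arXiv:1410.7630 — 3 statements merged into one kernel-verified Lean document; each statement's English description precedes it below -/
import Mathlib

section
/- Let p1, p2 be distinct points in the plane and let θ be an angle with θ ≢ 0 (mod π). Then the set of points q (with q ≠ p1, q ≠ p2) such that the oriented angle ∠_q(p1, p2) is congruent to θ modulo π is contained in a circle passing through p1 and p2. -/
open Complex

/-- The oriented angle at `q` from the direction toward `a` to the direction toward `b`. -/
noncomputable def ang (q a b : ℂ) : Real.Angle :=
  (Complex.arg ((b - q) / (a - q)) : Real.Angle)

attribute [local instance] Complex.finrank_real_complex_fact

noncomputable local instance : Module.Oriented ℝ ℂ (Fin 2) := ⟨Complex.orientation⟩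

open EuclideanGeometry in
lemma ang_eq_oangle (q a b : ℂ) (h : a ≠ q) : ang q a b = ∡ a q b := by
  have hne : a - q ≠ 0 := sub_ne_zero.2 h
  have : EuclideanGeometry.oangle a q b = Complex.orientation.oangle (a - q) (b - q) := rfl
  rw [this, Complex.oangle, ang]
  congr 1
  have hsq : (0 : ℝ) < Complex.normSq (a - q) := Complex.normSq_pos.2 hne
  have : (b - q) / (a - q) = ((Complex.normSq (a - q))⁻¹ : ℝ) *
      ((starRingEnd ℂ) (a - q) * (b - q)) := by
    rw [div_eq_mul_inv, Complex.inv_def]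
    push_cast
    ring
  rw [this, Complex.arg_real_mul _ (inv_pos.2 hsq)]

/-- The locus of points seeing the segment `p₁p₂` under a fixed angle `θ ≢ 0 (mod π)`
is contained in a circle through `p₁` and `p₂`. -/
theorem inscribed_angle_locus (p₁ p₂ : ℂ) (hp : p₁ ≠ p₂) (θ : Real.Angle)
    (hθ : (2 : ℤ) • θ ≠ 0) :
    ∃ (c : ℂ) (r : ℝ), dist p₁ c = r ∧ dist p₂ c = r ∧
      ∀ q : ℂ, q ≠ p₁ → q ≠ p₂ → (2 : ℤ) • ang q p₁ p₂ = (2 : ℤ) • θ →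
        dist q c = r := by
  have hθ0 : θ ≠ 0 := by rintro rfl; simp at hθ
  set e : ℂ := Complex.exp (θ.toReal * Complex.I) with he
  have harge : (Complex.arg e : Real.Angle) = θ := by
    rw [he, Complex.exp_mul_I,
      Complex.arg_cos_add_sin_mul_I ⟨θ.neg_pi_lt_toReal, θ.toReal_le_pi⟩,
      Real.Angle.coe_toReal]
  have he1 : e ≠ 1 := by
    intro h
    apply hθ0
    rw [← harge, h, Complex.arg_one]
    rfl
  set u : ℂ := (p₂ - p₁) / (e - 1) with hu
  have hu0 : u ≠ 0 := div_ne_zero (sub_ne_zero.2 hp.symm) (sub_ne_zero.2 he1)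
  set q₀ : ℂ := p₁ - u with hq₀
  have h1 : p₁ - q₀ = u := by rw [hq₀]; ring
  have h2 : p₂ - q₀ = u * e := by
    have h3 : p₂ - p₁ = u * (e - 1) := (div_mul_cancel₀ _ (sub_ne_zero.2 he1)).symm
    rw [hq₀]
    linear_combination h3
  have hq₀p₁ : p₁ ≠ q₀ := by
    intro h
    apply hu0
    rw [← h1, ← h, sub_self]
  have hang₀ : ang q₀ p₁ p₂ = θ := by
    rw [ang, h1, h2, mul_comm, mul_div_assoc, div_self hu0, mul_one, harge]
  -- q₀ gives angle θ, so {p₁, q₀, p₂} is not collinear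
  have hoangle₀ : EuclideanGeometry.oangle p₁ q₀ p₂ = θ := by
    rw [← ang_eq_oangle _ _ _ hq₀p₁, hang₀]
  have hnc : ¬Collinear ℝ ({p₁, q₀, p₂} : Set ℂ) := by
    intro hc
    rcases EuclideanGeometry.oangle_eq_zero_or_eq_pi_iff_collinear.2 hc with h | h
    · exact hθ0 (hoangle₀ ▸ h)
    · apply hθ
      rw [← hoangle₀, h]
      simp [Real.Angle.two_zsmul_coe_pi]
  have hai : AffineIndependent ℝ ![p₁, q₀, p₂] := affineIndependent_iff_not_collinear_set.2 hnc
  set t : Affine.Triangle ℝ ℂ := ⟨![p₁, q₀, p₂], hai⟩ with ht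
  refine ⟨t.circumcenter, t.circumradius, ?_, ?_, ?_⟩
  · exact (t.mem_circumsphere 0 : _)
  · exact (t.mem_circumsphere 2 : _)
  · intro q hq1 hq2 hangq
    have h : (2 : ℤ) • EuclideanGeometry.oangle (t.points 0) q (t.points 2) =
        (2 : ℤ) • EuclideanGeometry.oangle (t.points 0) (t.points 1) (t.points 2) := by
      show (2 : ℤ) • EuclideanGeometry.oangle p₁ q p₂ =
        (2 : ℤ) • EuclideanGeometry.oangle p₁ q₀ p₂
      rw [← ang_eq_oangle _ _ _ (Ne.symm hq1), hoangle₀, hangq]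
    exact Affine.Triangle.mem_circumsphere_of_two_zsmul_oangle_eq
      (by decide : (0 : Fin 3) ≠ 1) (by decide : (0 : Fin 3) ≠ 2) (by decide) h
end

section
/- Let p1, p2, p3 be three non-collinear points in the plane, and let q, q' be two points, each distinct from p1, p2, p3, such that q and q' do not lie on the circle through p1, p2, p3. If ∠_q(p1, p2) ≡ ∠_{q'}(p1, p2) (mod π) and ∠_q(p1, p3) ≡ ∠_{q'}(p1, p3) (mod π), then q = q'. -/
open Complex

/-- The angle condition (mod π) implies that a cross-ratio-type quantity is real. -/
lemma key_real (q q' p₁ a : ℂ) (hq1 : q ≠ p₁) (hqa : q ≠ a) (hq'1 : q' ≠ p₁) (hq'a : q' ≠ a)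
    (h : (2 : ℤ) • ang q p₁ a = (2 : ℤ) • ang q' p₁ a) :
    ((a - q) * (starRingEnd ℂ) (a - q') * ((p₁ - q') * (starRingEnd ℂ) (p₁ - q))).im = 0 := by
  set z : ℂ := (a - q) / (p₁ - q) with hz
  set z' : ℂ := (a - q') / (p₁ - q') with hz'
  have h1 : (p₁ - q) ≠ 0 := sub_ne_zero.mpr hq1.symm
  have h2 : (a - q) ≠ 0 := sub_ne_zero.mpr hqa.symm
  have h3 : (p₁ - q') ≠ 0 := sub_ne_zero.mpr hq'1.symm
  have h4 : (a - q') ≠ 0 := sub_ne_zero.mpr hq'a.symm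
  have hzne : z ≠ 0 := div_ne_zero h2 h1
  have hz'ne : z' ≠ 0 := div_ne_zero h4 h3
  have him : (z / z').im = 0 := by
    have hd : (2 : ℤ) • ((arg (z / z') : Real.Angle)) = 0 := by
      rw [arg_div_coe_angle hzne hz'ne]
      have : ang q p₁ a = (arg z : Real.Angle) := rfl
      rw [smul_sub, sub_eq_zero]
      exact h
    have hor := Real.Angle.two_zsmul_eq_zero_iff.mp hd
    have hsin : Real.sin (arg (z / z')) = 0 := by
      rcases hor with h0 | hpi
      · have := congrArg Real.Angle.sin h0
        simpa [Real.Angle.sin_coe] using this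
      · have := congrArg Real.Angle.sin hpi
        simpa [Real.Angle.sin_coe] using this
    have := Complex.norm_mul_sin_arg (z / z')
    rw [hsin, mul_zero] at this
    exact this.symm
  have hT : (a - q) * (starRingEnd ℂ) (a - q') * ((p₁ - q') * (starRingEnd ℂ) (p₁ - q))
      = (z / z') * (((p₁ - q) * (starRingEnd ℂ) (p₁ - q)) * ((a - q') * (starRingEnd ℂ) (a - q'))) := by
    rw [hz, hz']
    field_simp
  rw [hT, Complex.mul_conj, Complex.mul_conj, ← ofReal_mul]
  simp [him]

/-- Injectivity of the measurement map for three target points, outside the circle through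
the target points. -/
theorem measurement_injective (p₁ p₂ p₃ q q' : ℂ)
    (hcol : ¬ Collinear ℝ ({p₁, p₂, p₃} : Set ℂ))
    (hq1 : q ≠ p₁) (hq2 : q ≠ p₂) (hq3 : q ≠ p₃)
    (hq'1 : q' ≠ p₁) (hq'2 : q' ≠ p₂) (hq'3 : q' ≠ p₃)
    (hqc : ∀ (c : ℂ) (r : ℝ), dist p₁ c = r → dist p₂ c = r → dist p₃ c = r →
      dist q c ≠ r)
    (hq'c : ∀ (c : ℂ) (r : ℝ), dist p₁ c = r → dist p₂ c = r → dist p₃ c = r →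
      dist q' c ≠ r)
    (h2 : (2 : ℤ) • ang q p₁ p₂ = (2 : ℤ) • ang q' p₁ p₂)
    (h3 : (2 : ℤ) • ang q p₁ p₃ = (2 : ℤ) • ang q' p₁ p₃) :
    q = q' := by
  by_contra hne
  set w : ℂ := (p₁ - q') * (starRingEnd ℂ) (p₁ - q) with hw
  -- F vanishes at p₁, p₂, p₃ and q
  set F : ℂ → ℝ := fun z => ((z - q) * (starRingEnd ℂ) (z - q') * w).im with hF
  have hFp1 : F p₁ = 0 := by
    have : (p₁ - q) * (starRingEnd ℂ) (p₁ - q') * w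
        = ((p₁ - q) * (starRingEnd ℂ) (p₁ - q)) * ((p₁ - q') * (starRingEnd ℂ) (p₁ - q')) := by
      rw [hw]; ring
    rw [hF]; simp only [this, Complex.mul_conj, ← ofReal_mul]
    simp
  have hFp2 : F p₂ = 0 := key_real q q' p₁ p₂ hq1 hq2 hq'1 hq'2 h2
  have hFp3 : F p₃ = 0 := key_real q q' p₁ p₃ hq1 hq3 hq'1 hq'3 h3
  have hFq : F q = 0 := by simp [hF]
  -- quadratic form decomposition
  set A : ℝ := w.im with hA
  set β : ℂ := (starRingEnd ℂ) w * (starRingEnd ℂ) q - w * (starRingEnd ℂ) q' with hβ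
  set C : ℝ := (w * q * (starRingEnd ℂ) q').im with hC
  have hid : ∀ z : ℂ, F z = A * Complex.normSq z + (β * z).im + C := by
    intro z
    rw [hF, hA, hβ, hC]
    simp only [Complex.mul_im, Complex.mul_re, Complex.sub_re, Complex.sub_im, Complex.conj_re,
      Complex.conj_im, Complex.normSq_apply]
    ring
  have hwne : w ≠ 0 :=
    mul_ne_zero (sub_ne_zero.mpr hq'1.symm) (star_ne_zero.mpr (sub_ne_zero.mpr hq1.symm))
  by_cases hAz : A = 0
  · -- line case: p₁, p₂, p₃ collinear, contradiction
    have hwre : w.re ≠ 0 := by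
      intro h0
      exact hwne (Complex.ext h0 hAz)
    have hβne : β ≠ 0 := by
      have hcw : (starRingEnd ℂ) w = w := Complex.conj_eq_iff_im.mpr hAz
      rw [hβ, hcw, ← mul_sub]
      apply mul_ne_zero hwne
      rw [sub_ne_zero]
      exact fun hc => hne (by simpa using congrArg (starRingEnd ℂ) hc)
    have hline : ∀ x : ℂ, F x = 0 → (β * (x - p₁)).im = 0 := by
      intro x hx
      have h1 := hid x
      have h2 := hid p₁
      rw [hx] at h1
      rw [hFp1] at h2
      rw [hAz] at h1 h2
      simp only [zero_mul, zero_add] at h1 h2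
      have : (β * x).im = (β * p₁).im := by linarith
      rw [mul_sub, Complex.sub_im, this, sub_self]
    apply hcol
    rw [collinear_iff_of_mem (Set.mem_insert p₁ {p₂, p₃})]
    refine ⟨(starRingEnd ℂ) β, ?_⟩
    intro p hp
    have key : ∀ x : ℂ, F x = 0 → ∃ t : ℝ, x = t • (starRingEnd ℂ) β +ᵥ p₁ := by
      intro x hx
      refine ⟨(β * (x - p₁)).re / Complex.normSq β, ?_⟩
      have hreal : β * (x - p₁) = (((β * (x - p₁)).re : ℝ) : ℂ) :=
        Complex.ext (by simp) (by simp [hline x hx])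
      have hnsne : (Complex.normSq β : ℂ) ≠ 0 := by
        simpa using (Complex.normSq_pos.mpr hβne).ne'
      have : x - p₁ = (((β * (x - p₁)).re : ℝ) : ℂ) * (starRingEnd ℂ) β / Complex.normSq β := by
        rw [← hreal]
        rw [mul_comm β (x - p₁), mul_assoc, Complex.mul_conj]
        field_simp
      have hx2 : x = (((β * (x - p₁)).re : ℝ) : ℂ) * (starRingEnd ℂ) β / Complex.normSq β + p₁ :=
        eq_add_of_sub_eq this
      have hx' : x = (((β * (x - p₁)).re / Complex.normSq β : ℝ) : ℂ) * (starRingEnd ℂ) β + p₁ := by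
        rw [ofReal_div, div_mul_eq_mul_div]; exact hx2
      simpa [Complex.real_smul] using hx'
    rcases hp with rfl | rfl | rfl
    · exact key _ hFp1
    · exact key _ hFp2
    · exact key _ hFp3
  · -- circle case: all four points on a circle centered at c
    set c : ℂ := (⟨-β.im / (2 * A), -β.re / (2 * A)⟩ : ℂ) with hc
    set ρ : ℝ := Complex.normSq c - C / A with hρ
    have hid2 : ∀ z : ℂ, F z = A * (Complex.normSq (z - c) - ρ) := by
      intro z
      rw [hid z, hρ, hc]
      simp only [Complex.normSq_apply, Complex.mul_im, Complex.sub_re, Complex.sub_im]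
      field_simp
      ring
    have hcirc : ∀ x : ℂ, F x = 0 → Complex.normSq (x - c) = ρ := by
      intro x hx
      have := hid2 x
      rw [hx] at this
      have := (mul_eq_zero.mp this.symm).resolve_left hAz
      linarith [this]
    have hρnn : 0 ≤ ρ := (hcirc p₁ hFp1) ▸ Complex.normSq_nonneg _
    set r : ℝ := Real.sqrt ρ with hr
    have hdist : ∀ x : ℂ, F x = 0 → dist x c = r := by
      intro x hx
      rw [Complex.dist_eq, Complex.norm_def, hcirc x hx]
    exact hqc c r (hdist p₁ hFp1) (hdist p₂ hFp2) (hdist p₃ hFp3) (hdist q hFq)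
end

section
/- Let p1, ..., p5 be five points in the plane in general position (no three collinear among the relevant quadruples), and let q1 be the intersection of lines p1p3 and p2p4, q2 the intersection of lines p1p5 and p2p4, q3 the intersection of lines p1p3 and p2p5. Set α = ∠_{q1}(p1,p2), β = ∠_{q2}(p1,p2), γ = ∠_{q3}(p1,p2), all taken modulo π. Then ∠_{p5}(p1,p2) ≡ β + γ - α (mod π). -/
open Complex

private lemma two_zsmul_arg_real_mul {t : ℝ} (ht : t ≠ 0) {z : ℂ} (hz : z ≠ 0) :
    (2 : ℤ) • ((Complex.arg ((t : ℂ) * z) : Real.Angle)) =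
      (2 : ℤ) • ((Complex.arg z : Real.Angle)) := by
  rcases ht.lt_or_gt with h | h
  · have : (t : ℂ) * z = -(((-t : ℝ) : ℂ) * z) := by push_cast; ring
    rw [this, Complex.arg_neg_coe_angle
        (mul_ne_zero (Complex.ofReal_ne_zero.2 (neg_ne_zero.2 ht)) hz),
      Complex.arg_real_mul z (neg_pos.2 h), smul_add, Real.Angle.two_zsmul_coe_pi, add_zero]
  · rw [Complex.arg_real_mul z h]

private lemma collinear_ratio {a b q : ℂ} (h : Collinear ℝ ({a, b, q} : Set ℂ))
    (hab : b ≠ a) (hqa : q ≠ a) : ∃ t : ℝ, t ≠ 0 ∧ q - a = (t : ℂ) * (b - a) := by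
  obtain ⟨v, hv⟩ := (collinear_iff_of_mem (show a ∈ ({a, b, q} : Set ℂ) by simp)).1 h
  obtain ⟨tb, htb⟩ := hv b (by simp)
  obtain ⟨tq, htq⟩ := hv q (by simp)
  have hb : b - a = tb • v := by rw [htb]; simp [vadd_eq_add]
  have hq : q - a = tq • v := by rw [htq]; simp [vadd_eq_add]
  have htb0 : tb ≠ 0 := by
    rintro rfl; apply hab; have : b - a = 0 := by simp [hb]
    linear_combination (norm := ring_nf) this
  have htq0 : tq ≠ 0 := by
    rintro rfl; apply hqa; have : q - a = 0 := by simp [hq]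
    linear_combination (norm := ring_nf) this
  refine ⟨tq / tb, div_ne_zero htq0 htb0, ?_⟩
  rw [hq, hb, Complex.real_smul, Complex.real_smul]
  push_cast
  field_simp
  rw [mul_div_assoc, div_self (Complex.ofReal_ne_zero.2 htb0), mul_one]

private lemma two_zsmul_ang_eq {q a b z w : ℂ} {t s : ℝ} (ht : t ≠ 0) (hs : s ≠ 0)
    (ha : a - q = (t : ℂ) * z) (hb : b - q = (s : ℂ) * w) (hz : z ≠ 0) (hw : w ≠ 0) :
    (2 : ℤ) • ((Complex.arg ((b - q) / (a - q)) : Real.Angle)) =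
      (2 : ℤ) • ((Complex.arg w : Real.Angle)) - (2 : ℤ) • ((Complex.arg z : Real.Angle)) := by
  have key : (b - q) / (a - q) = ((s / t : ℝ) : ℂ) * (w / z) := by
    rw [ha, hb]; push_cast
    field_simp
  rw [key, two_zsmul_arg_real_mul (div_ne_zero hs ht) (div_ne_zero hw hz),
    Complex.arg_div_coe_angle hw hz, smul_sub]

/-- Key angle identity for identifying five points from their profile: with `q₁, q₂, q₃`
the diagonal intersection points of the quadrilaterals `(p₁,p₂,p₃,p₄)`, `(p₁,p₂,p₅,p₄)`,
`(p₁,p₂,p₃,p₅)`, one has `∠_{p₅}(p₁,p₂) ≡ β + γ - α (mod π)`. -/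
theorem five_point_identification (p : Fin 5 → ℂ) (hinj : Function.Injective p)
    (hgen : ∀ i j k : Fin 5, i ≠ j → j ≠ k → i ≠ k →
      ¬ Collinear ℝ ({p i, p j, p k} : Set ℂ))
    (q₁ q₂ q₃ : ℂ)
    (hq₁ : Collinear ℝ ({p 0, p 2, q₁} : Set ℂ) ∧ Collinear ℝ ({p 1, p 3, q₁} : Set ℂ))
    (hq₂ : Collinear ℝ ({p 0, p 4, q₂} : Set ℂ) ∧ Collinear ℝ ({p 1, p 3, q₂} : Set ℂ))
    (hq₃ : Collinear ℝ ({p 0, p 2, q₃} : Set ℂ) ∧ Collinear ℝ ({p 1, p 4, q₃} : Set ℂ))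
    (hq₁p : q₁ ≠ p 0 ∧ q₁ ≠ p 1) (hq₂p : q₂ ≠ p 0 ∧ q₂ ≠ p 1) (hq₃p : q₃ ≠ p 0 ∧ q₃ ≠ p 1) :
    (2 : ℤ) • ang (p 4) (p 0) (p 1) =
      (2 : ℤ) • (ang q₂ (p 0) (p 1) + ang q₃ (p 0) (p 1) - ang q₁ (p 0) (p 1)) := by
  -- directions
  set u : ℂ := p 2 - p 0 with hu_def
  set v : ℂ := p 3 - p 1 with hv_def
  set S : ℂ := p 4 - p 0 with hS_def
  set W : ℂ := p 4 - p 1 with hW_def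
  have hu : u ≠ 0 := sub_ne_zero.2 (fun h => (by decide : (2 : Fin 5) ≠ 0) (hinj h))
  have hv : v ≠ 0 := sub_ne_zero.2 (fun h => (by decide : (3 : Fin 5) ≠ 1) (hinj h))
  have hS : S ≠ 0 := sub_ne_zero.2 (fun h => (by decide : (4 : Fin 5) ≠ 0) (hinj h))
  have hW : W ≠ 0 := sub_ne_zero.2 (fun h => (by decide : (4 : Fin 5) ≠ 1) (hinj h))
  -- ratios
  obtain ⟨t₁, ht₁, h₁⟩ := collinear_ratio hq₁.1 (fun h => (by decide : (2 : Fin 5) ≠ 0) (hinj h)) hq₁p.1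
  obtain ⟨s₁, hs₁, h₁'⟩ := collinear_ratio hq₁.2 (fun h => (by decide : (3 : Fin 5) ≠ 1) (hinj h)) hq₁p.2
  obtain ⟨t₂, ht₂, h₂⟩ := collinear_ratio hq₂.1 (fun h => (by decide : (4 : Fin 5) ≠ 0) (hinj h)) hq₂p.1
  obtain ⟨s₂, hs₂, h₂'⟩ := collinear_ratio hq₂.2 (fun h => (by decide : (3 : Fin 5) ≠ 1) (hinj h)) hq₂p.2
  obtain ⟨t₃, ht₃, h₃⟩ := collinear_ratio hq₃.1 (fun h => (by decide : (2 : Fin 5) ≠ 0) (hinj h)) hq₃p.1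
  obtain ⟨s₃, hs₃, h₃'⟩ := collinear_ratio hq₃.2 (fun h => (by decide : (4 : Fin 5) ≠ 1) (hinj h)) hq₃p.2
  -- express each doubled angle
  have e₁ : (2 : ℤ) • ang q₁ (p 0) (p 1) =
      (2 : ℤ) • ((Complex.arg v : Real.Angle)) - (2 : ℤ) • ((Complex.arg u : Real.Angle)) := by
    refine two_zsmul_ang_eq (t := -t₁) (s := -s₁) (neg_ne_zero.2 ht₁) (neg_ne_zero.2 hs₁)
      ?_ ?_ hu hv
    · push_cast; linear_combination -h₁
    · push_cast; linear_combination -h₁'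
  have e₂ : (2 : ℤ) • ang q₂ (p 0) (p 1) =
      (2 : ℤ) • ((Complex.arg v : Real.Angle)) - (2 : ℤ) • ((Complex.arg S : Real.Angle)) := by
    refine two_zsmul_ang_eq (t := -t₂) (s := -s₂) (neg_ne_zero.2 ht₂) (neg_ne_zero.2 hs₂)
      ?_ ?_ hS hv
    · push_cast; linear_combination -h₂
    · push_cast; linear_combination -h₂'
  have e₃ : (2 : ℤ) • ang q₃ (p 0) (p 1) =
      (2 : ℤ) • ((Complex.arg W : Real.Angle)) - (2 : ℤ) • ((Complex.arg u : Real.Angle)) := by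
    refine two_zsmul_ang_eq (t := -t₃) (s := -s₃) (neg_ne_zero.2 ht₃) (neg_ne_zero.2 hs₃)
      ?_ ?_ hu hW
    · push_cast; linear_combination -h₃
    · push_cast; linear_combination -h₃'
  have e₀ : (2 : ℤ) • ang (p 4) (p 0) (p 1) =
      (2 : ℤ) • ((Complex.arg W : Real.Angle)) - (2 : ℤ) • ((Complex.arg S : Real.Angle)) := by
    refine two_zsmul_ang_eq (t := (-1 : ℝ)) (s := (-1 : ℝ)) (by norm_num) (by norm_num)
      ?_ ?_ hS hW
    · push_cast; rw [hS_def]; ring_nf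
    · push_cast; rw [hW_def]; ring_nf
  rw [smul_sub, smul_add, e₀, e₁, e₂, e₃]
  abel
end
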